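/- arXiv:2208.12167 — 4 statements merged into one kernel-verified Lean document; each statement's English description precedes it below -/
import Mathlib

section
/- For any positive integer n, the permanent of the 2n×2n matrix A with entries A[i][j] = 1 if i ≥ j and A[i][j] = -1 if i < j equals 0. -/
/-!
Expanding along the first column (all ones) and moving the first row, which is `-1` off that
column, into the slot of the deleted row gives `per A(m+1) = per A(m) - ∑ᵢ per A(m)[i := 1]`,
where `A(m)[i := 1]` has its `i`-th row replaced by ones. The last row of `A(m)` is already all
ones, so that term is `per A(m)`. For the other rows, the substitution `(a, b) ↦ (m-2-a, m-1-b)`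
on the first `m - 1` rows turns `b ≤ a` into its negation and swaps the roles of the rows
`i` and `m - 2 - i`, so `per A(m)[m-2-i := 1] = (-1)^m per A(m)[i := 1]`. For odd `m` these terms
cancel in pairs, whence `per A(m + 1) = 0`.
-/

open Equiv Finset

theorem prod_ite_eq_one_neg_one {ι R : Type*} [Fintype ι] [DecidableEq ι] [CommRing R] (r : ι) :
    ∏ a, (if a = r then (1 : R) else -1) = (-1) ^ (Fintype.card ι + 1) := by
  have h (a : ι) : (if a = r then (1 : R) else -1) = -1 * if a = r then -1 else 1 := by
    split_ifs <;> simp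
  simp only [h, prod_mul_distrib, prod_const, card_univ, prod_ite_eq', mem_univ, if_true,
    pow_succ]

namespace Matrix

section Permanent

variable {R : Type*} [CommSemiring R]

theorem permanent_succ_column_zero {n : ℕ} (A : Matrix (Fin (n + 1)) (Fin (n + 1)) R) :
    A.permanent = ∑ i, A i 0 * (A.submatrix i.succAbove Fin.succ).permanent := by
  rw [permanent, ← Equiv.sum_comp Perm.decomposeFin.symm, Fintype.sum_prod_type]
  refine Fintype.sum_congr _ _ fun p => ?_
  simp only [Fin.prod_univ_succ, Perm.decomposeFin_symm_apply_zero,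
    Perm.decomposeFin_symm_apply_succ, ← mul_sum]
  congr 1
  cases p using Fin.cases with
  | zero => simp [permanent]
  | succ i =>
    rw [← permanent_permute_cols i.cycleRange]
    simp [permanent, Fin.succAbove_cycleRange]

variable {n : Type*} [DecidableEq n] [Fintype n]

theorem permanent_diagonal_mul (d : n → R) (M : Matrix n n R) :
    (diagonal d * M).permanent = (∏ i, d i) * M.permanent := by
  simp only [permanent, diagonal_mul, mul_sum, prod_mul_distrib]
  refine sum_congr rfl fun σ _ => ?_
  rw [Equiv.prod_comp σ d]

theorem permanent_submatrix_equiv (e f : Perm n) (M : Matrix n n R) :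
    (M.submatrix e f).permanent = M.permanent :=
  (permanent_permute_rows f _).trans (permanent_permute_cols e M)

end Permanent

def signedTriangular (R : Type*) [One R] [Neg R] (m : ℕ) : Matrix (Fin m) (Fin m) R :=
  of fun i j => if j ≤ i then 1 else -1

section SignedTriangular

variable {R : Type*} [CommRing R]

theorem permanent_signedTriangular_succ (m : ℕ) :
    (signedTriangular R (m + 1)).permanent = (signedTriangular R m).permanent -
      ∑ i, ((signedTriangular R m).updateRow i 1).permanent := by
  have minor_zero : (signedTriangular R (m + 1)).submatrix (Fin.succAbove 0) Fin.succ =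
      signedTriangular R m := by
    ext i j
    simp [signedTriangular]
  have minor_succ (i : Fin m) :
      ((signedTriangular R (m + 1)).submatrix i.succ.succAbove Fin.succ).submatrix
          i.cycleRange id =
        (signedTriangular R m).updateRow i ((-1 : R) • 1) := by
    ext a b
    rcases eq_or_ne a i with rfl | hai
    · simp [signedTriangular, Fin.succAbove_cycleRange]
    · simp [signedTriangular, Fin.succAbove_cycleRange, hai,
        swap_apply_of_ne_of_ne (Fin.succ_ne_zero a) (Fin.succ_injective _ |>.ne hai)]
  rw [permanent_succ_column_zero, Fin.sum_univ_succ, minor_zero, sub_eq_add_neg,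
    ← sum_neg_distrib]
  congr 1
  · simp [signedTriangular]
  · refine sum_congr rfl fun i _ => ?_
    rw [← permanent_permute_cols i.cycleRange, minor_succ, permanent_updateRow_smul]
    simp [signedTriangular]

theorem permanent_signedTriangular_updateRow_castSucc_rev {k : ℕ} (q : Fin k) :
    ((signedTriangular R (k + 1)).updateRow q.rev.castSucc 1).permanent =
      (-1) ^ (k + 1) * ((signedTriangular R (k + 1)).updateRow q.castSucc 1).permanent := by
  let ρ : Perm (Fin (k + 1)) := finSuccEquivLast.symm.permCongr (optionCongr Fin.revPerm)
  have ρ_castSucc (a : Fin k) : ρ a.castSucc = a.rev.castSucc := by simp [ρ]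
  have ρ_last : ρ (Fin.last k) = Fin.last k := by simp [ρ]
  -- `ρ` sends the all-ones row `q.rev` to `q`, fixes the all-ones last row, and on every other
  -- row the reversal negates the entries.
  let δ : Fin (k + 1) → R := Fin.lastCases 1 fun a => if a = q.rev then 1 else -1
  have key : (signedTriangular R (k + 1)).updateRow q.rev.castSucc 1 =
      diagonal δ *
        ((signedTriangular R (k + 1)).updateRow q.castSucc 1).submatrix ρ Fin.revPerm := by
    ext i j
    induction i using Fin.lastCases with
    | last => simp [δ, ρ_last, signedTriangular, (Fin.castSucc_lt_last _).ne', Fin.le_last]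
    | cast a =>
      rcases eq_or_ne a q.rev with rfl | ha
      · simp [δ, ρ_castSucc]
      · have hrev : a.rev ≠ q := fun h => ha (h ▸ (Fin.rev_rev a).symm)
        simp only [updateRow_apply, diagonal_mul, submatrix_apply, ρ_castSucc, δ,
          Fin.lastCases_castSucc, signedTriangular, of_apply, Fin.castSucc_inj, ha, hrev,
          if_false, Fin.revPerm_apply, Fin.le_def, Fin.val_rev, Fin.val_castSucc]
        have := j.isLt
        have := a.isLt
        split_ifs <;> first | omega | norm_num
  rw [key, permanent_diagonal_mul, permanent_submatrix_equiv, Fin.prod_univ_castSucc]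
  simp [δ, prod_ite_eq_one_neg_one]

theorem sum_permanent_signedTriangular_updateRow_castSucc_eq_zero [IsAddTorsionFree R] {k : ℕ}
    (hk : Even k) :
    ∑ q : Fin k, ((signedTriangular R (k + 1)).updateRow q.castSucc 1).permanent = 0 := by
  rw [← self_eq_neg]
  calc ∑ q : Fin k, ((signedTriangular R (k + 1)).updateRow q.castSucc 1).permanent
      = ∑ q : Fin k, ((signedTriangular R (k + 1)).updateRow q.rev.castSucc 1).permanent :=
        (Fintype.sum_equiv Fin.revPerm _ _ fun q => by simp).symm
    _ = _ := by simp [permanent_signedTriangular_updateRow_castSucc_rev, pow_succ, hk.neg_one_pow]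

theorem permanent_signedTriangular_add_two (k : ℕ) :
    (signedTriangular R (k + 2)).permanent =
      -∑ q : Fin k, ((signedTriangular R (k + 1)).updateRow q.castSucc 1).permanent := by
  have last_row :
      (signedTriangular R (k + 1)).updateRow (Fin.last k) 1 = signedTriangular R (k + 1) := by
    ext i j
    rcases eq_or_ne i (Fin.last k) with rfl | hi
    · simp [signedTriangular, Fin.le_last]
    · simp [hi]
  rw [permanent_signedTriangular_succ, Fin.sum_univ_castSucc, last_row]
  ring

theorem permanent_signedTriangular_eq_zero_of_even [IsAddTorsionFree R] {m : ℕ} (hm : Even m)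
    (hm₀ : m ≠ 0) : (signedTriangular R m).permanent = 0 := by
  obtain ⟨k, hk, rfl⟩ : ∃ k, Even k ∧ m = k + 2 :=
    ⟨m - 2, by simpa [Nat.even_sub (show 2 ≤ m by grind)] using hm, by grind⟩
  rw [permanent_signedTriangular_add_two,
    sum_permanent_signedTriangular_updateRow_castSucc_eq_zero hk, neg_zero]

end SignedTriangular

end Matrix

/-- For any positive integer `n`, the permanent of the `2n × 2n` matrix with entry `1`
in position `(i, j)` when `i ≥ j` and `-1` when `i < j` equals `0`. -/
theorem permanent_signed_triangular_eq_zero (n : ℕ) (hn : 0 < n) :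
    Matrix.permanent
      (Matrix.of fun i j : Fin (2 * n) => if j ≤ i then (1 : ℚ) else -1) = 0 :=
  Matrix.permanent_signedTriangular_eq_zero_of_even (even_two_mul n) (by omega)
end

section
/- If s_k are numbers satisfying s_1 = -1 and 1 + Σ_{k=1}^n C(2n-1, 2k-1) s_k = 0 for all n ≥ 1, then s_k = (-1)^k T_k for all k ≥ 1, where T_k are the tangent numbers defined by tan x = Σ_{k≥1} T_k x^{2k-1}/(2k-1)!. -/
/-- The formal power series of `sin` over `ℚ`. -/
noncomputable def formalSin : PowerSeries ℚ :=
  PowerSeries.mk fun n => if n % 2 = 1 then (-1 : ℚ) ^ (n / 2) / n.factorial else 0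

/-- The formal power series of `cos` over `ℚ`. -/
noncomputable def formalCos : PowerSeries ℚ :=
  PowerSeries.mk fun n => if n % 2 = 0 then (-1 : ℚ) ^ (n / 2) / n.factorial else 0

/-- The formal power series of `tan` over `ℚ`. -/
noncomputable def formalTan : PowerSeries ℚ := formalSin * formalCos⁻¹

/-- The `n`-th tangent number `T_n`, defined by
`tan x = ∑_{n ≥ 1} T_n x^{2n-1}/(2n-1)!`. -/
noncomputable def tangentNumber (n : ℕ) : ℚ :=
  (2 * n - 1).factorial * PowerSeries.coeff (R := ℚ) (2 * n - 1) formalTan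

open Finset

/-! Comparing the coefficients of `x^{2n-1}` in `tan x · cos x = sin x` gives
`∑_{k=1}^n C(2n-1, 2k-1) (-1)^k T_k = -1`, since `tan` is odd and `cos` is even. So `(-1)^k T_k`
satisfies the same recurrence as `s`, and the recurrence is a unitriangular linear system. -/

theorem eq_of_forall_sum_Icc_mul_eq {R : Type*} [Ring R] (a : ℕ → ℕ → R)
    (ha : ∀ n, 1 ≤ n → IsLeftRegular (a n n)) {s t : ℕ → R}
    (h : ∀ n, 1 ≤ n → ∑ k ∈ Icc 1 n, a n k * s k = ∑ k ∈ Icc 1 n, a n k * t k) :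
    ∀ n, 1 ≤ n → s n = t n := by
  intro n
  induction n using Nat.strong_induction_on with
  | _ n ih =>
    intro hn
    obtain ⟨m, rfl⟩ : ∃ m, n = m + 1 := ⟨n - 1, by omega⟩
    have hlower : ∑ k ∈ Icc 1 m, a (m + 1) k * s k = ∑ k ∈ Icc 1 m, a (m + 1) k * t k :=
      sum_congr rfl fun k hk => by
        rw [ih k (Nat.lt_succ_of_le (mem_Icc.mp hk).2) (mem_Icc.mp hk).1]
    have htop := h (m + 1) hn
    rw [sum_Icc_succ_top (by omega), sum_Icc_succ_top (by omega), hlower] at htop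
    exact ha (m + 1) hn (add_left_cancel htop)

theorem Finset.Nat.sum_antidiagonal_two_mul_sub_one_eq_sum_Icc {R : Type*}
    [NonUnitalNonAssocSemiring R] {f g : ℕ → R} (hf : ∀ m, f (2 * m) = 0) {n : ℕ} (hn : 1 ≤ n) :
    ∑ p ∈ antidiagonal (2 * n - 1), f p.1 * g p.2 =
      ∑ k ∈ Icc 1 n, f (2 * k - 1) * g (2 * (n - k)) := by
  symm
  refine sum_of_injOn (fun k => (2 * k - 1, 2 * (n - k))) ?_ ?_ ?_ fun _ _ => rfl
  · intro a ha b hb hab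
    simp only [coe_Icc, Set.mem_Icc, Prod.mk.injEq] at ha hb hab
    omega
  · intro k hk
    simp only [coe_Icc, Set.mem_Icc, mem_coe, HasAntidiagonal.mem_antidiagonal] at hk ⊢
    omega
  · rintro ⟨i, j⟩ hij hnot
    rw [HasAntidiagonal.mem_antidiagonal] at hij
    obtain ⟨m, rfl | rfl⟩ := Nat.even_or_odd' i
    · simp only [hf, zero_mul]
    · refine absurd ⟨m + 1, ?_, ?_⟩ hnot
      · simp only [coe_Icc, Set.mem_Icc]
        omega
      · simp only [Prod.mk.injEq]
        omega

namespace PowerSeries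

theorem coeff_two_mul_eq_zero_of_rescale_neg_one_eq_neg {R : Type*} [CommRing R]
    [NoZeroDivisors R] [CharZero R] {f : R⟦X⟧} (hf : rescale (-1) f = -f) (m : ℕ) :
    coeff (2 * m) f = 0 := by
  have h := congrArg (coeff (2 * m)) hf
  rwa [coeff_rescale, map_neg, pow_mul, neg_one_sq, one_pow, one_mul,
    CharZero.eq_neg_self_iff] at h

end PowerSeries

open PowerSeries

theorem constantCoeff_formalCos : constantCoeff formalCos = 1 := by
  simp [formalCos]

theorem formalCos_ne_zero : formalCos ≠ 0 := fun h => by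
  simpa [h] using constantCoeff_formalCos

theorem formalTan_mul_formalCos : formalTan * formalCos = formalSin := by
  rw [formalTan, mul_assoc, PowerSeries.inv_mul_cancel _ (by simp [constantCoeff_formalCos]),
    mul_one]

theorem rescale_neg_one_formalSin : rescale (-1) formalSin = -formalSin := by
  ext n
  simp only [coeff_rescale, formalSin, coeff_mk, map_neg]
  rcases Nat.even_or_odd n with h | h
  · simp [Nat.even_iff.mp h]
  · simp [Nat.odd_iff.mp h, h.neg_one_pow]

theorem rescale_neg_one_formalCos : rescale (-1) formalCos = formalCos := by
  ext n
  simp only [coeff_rescale, formalCos, coeff_mk]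
  rcases Nat.even_or_odd n with h | h
  · simp [Nat.even_iff.mp h, h.neg_one_pow]
  · simp [Nat.odd_iff.mp h]

theorem rescale_neg_one_formalTan : rescale (-1) formalTan = -formalTan := by
  refine mul_right_cancel₀ formalCos_ne_zero ?_
  calc rescale (-1) formalTan * formalCos
      = rescale (-1) (formalTan * formalCos) := by rw [map_mul, rescale_neg_one_formalCos]
    _ = -formalTan * formalCos := by
      rw [formalTan_mul_formalCos, rescale_neg_one_formalSin, neg_mul, formalTan_mul_formalCos]

theorem coeff_two_mul_formalTan (m : ℕ) : coeff (2 * m) formalTan = 0 :=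
  coeff_two_mul_eq_zero_of_rescale_neg_one_eq_neg rescale_neg_one_formalTan m

theorem factorial_mul_coeff_two_mul_formalCos (m : ℕ) :
    ((2 * m).factorial : ℚ) * coeff (2 * m) formalCos = (-1) ^ m := by
  have : ((2 * m).factorial : ℚ) ≠ 0 := by positivity
  simp [formalCos, mul_div_cancel₀ _ this]

theorem factorial_mul_coeff_two_mul_add_one_formalSin (m : ℕ) :
    ((2 * m + 1).factorial : ℚ) * coeff (2 * m + 1) formalSin = (-1) ^ m := by
  have : ((2 * m + 1).factorial : ℚ) ≠ 0 := by positivity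
  have hdiv : (2 * m + 1) / 2 = m := by omega
  simp [formalSin, Nat.add_mod, hdiv, mul_div_cancel₀ _ this]

theorem choose_mul_neg_one_pow_mul_tangentNumber (k j : ℕ) (hk : 1 ≤ k) :
    ((2 * (k + j) - 1).choose (2 * k - 1) : ℚ) * ((-1) ^ k * tangentNumber k) =
      (-1) ^ (k + j) * (2 * (k + j) - 1).factorial *
        (coeff (2 * k - 1) formalTan * coeff (2 * j) formalCos) := by
  have hfact := Nat.choose_mul_factorial_mul_factorial (n := 2 * (k + j) - 1) (k := 2 * k - 1)
    (by omega)
  rw [show 2 * (k + j) - 1 - (2 * k - 1) = 2 * j by omega] at hfact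
  have hsign : (-1 : ℚ) ^ k = (-1) ^ (k + j) * (-1) ^ j := by
    rw [pow_add, mul_assoc, ← mul_pow, neg_one_mul, neg_neg, one_pow, mul_one]
  rw [hsign, ← factorial_mul_coeff_two_mul_formalCos j, ← hfact, tangentNumber]
  push_cast
  ring

theorem sum_choose_mul_neg_one_pow_mul_tangentNumber {n : ℕ} (hn : 1 ≤ n) :
    ∑ k ∈ Icc 1 n, ((2 * n - 1).choose (2 * k - 1) : ℚ) * ((-1) ^ k * tangentNumber k) = -1 := by
  have hcoeff := congrArg (coeff (2 * n - 1)) formalTan_mul_formalCos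
  rw [coeff_mul, Finset.Nat.sum_antidiagonal_two_mul_sub_one_eq_sum_Icc
    (f := fun i => coeff i formalTan) (g := fun i => coeff i formalCos) coeff_two_mul_formalTan hn]
    at hcoeff
  calc ∑ k ∈ Icc 1 n, ((2 * n - 1).choose (2 * k - 1) : ℚ) * ((-1) ^ k * tangentNumber k)
      = (-1) ^ n * (2 * n - 1).factorial * ∑ k ∈ Icc 1 n,
          coeff (2 * k - 1) formalTan * coeff (2 * (n - k)) formalCos := by
        rw [mul_sum]
        refine sum_congr rfl fun k hk => ?_
        obtain ⟨j, rfl⟩ : ∃ j, n = k + j := ⟨n - k, by rw [mem_Icc] at hk; omega⟩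
        rw [Nat.add_sub_cancel_left]
        exact choose_mul_neg_one_pow_mul_tangentNumber k j (mem_Icc.mp hk).1
    _ = (-1) ^ n * ((2 * n - 1).factorial * coeff (2 * n - 1) formalSin) := by
        rw [hcoeff, mul_assoc]
    _ = -1 := by
        obtain ⟨m, rfl⟩ : ∃ m, n = m + 1 := ⟨n - 1, by omega⟩
        rw [show 2 * (m + 1) - 1 = 2 * m + 1 by omega, factorial_mul_coeff_two_mul_add_one_formalSin,
          pow_succ, mul_right_comm, ← mul_pow, neg_one_mul, neg_neg, one_pow, one_mul]

theorem s_eq_neg_one_pow_mul_tangentNumber_general (s : ℕ → ℚ)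
    (hrec : ∀ n : ℕ, 1 ≤ n →
      1 + ∑ k ∈ Icc 1 n, (Nat.choose (2 * n - 1) (2 * k - 1) : ℚ) * s k = 0) :
    ∀ k : ℕ, 1 ≤ k → s k = (-1) ^ k * tangentNumber k := by
  refine eq_of_forall_sum_Icc_mul_eq (fun n k => ((2 * n - 1).choose (2 * k - 1) : ℚ))
    (fun n _ => by simpa using (isRegular_one (R := ℚ)).left) fun n hn => ?_
  rw [sum_choose_mul_neg_one_pow_mul_tangentNumber hn]
  linarith [hrec n hn]

theorem s_eq_neg_one_pow_mul_tangentNumber (s : ℕ → ℚ) (hs1 : s 1 = -1)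
    (hrec : ∀ n : ℕ, 1 ≤ n →
      1 + ∑ k ∈ Icc 1 n, (Nat.choose (2 * n - 1) (2 * k - 1) : ℚ) * s k = 0) :
    ∀ k : ℕ, 1 ≤ k → s k = (-1) ^ k * tangentNumber k :=
  s_eq_neg_one_pow_mul_tangentNumber_general s hrec
end

section
/- Let n > 1 be even and ζ a primitive n-th root of unity. Then Σ over all derangements τ of {1,...,n} of Π_{j=1}^n 1/(1 - ζ^{j-τ(j)}) = ((n-1)!!)^2 / 2^n. -/
/-!
Let `M i j = (1 - ζ ^ (j - i))⁻¹`. Its diagonal vanishes, so the left-hand side is the permanent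
of `M`. Off the diagonal `M i j + M j i = 1`, and for distinct `p, t, q` the partial-fraction
identity `M p t * M t q = M p q * (M p t + M t q - 1)` holds. Expanding a sum over permutations
along the cycle through a fixed index `t`, this identity removes `t` from every cycle of length at
least three, and the first identity makes all these contributions cancel. Only the transpositions
through `t` survive, so permanent and determinant obey the same recursion up to the sign of a
transposition: `perm M = (-1) ^ (n / 2) * det M`. Finally `M` is circulant; the Vandermonde matrix
of the powers of `ζ` diagonalises it with eigenvalues `(n - 1) / 2 - m`, `0 ≤ m < n`, whose product
is `(-1) ^ (n / 2) * ((n - 1)‼) ^ 2 / 2 ^ n`.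
-/

open Equiv Finset
open scoped Nat

namespace Matrix

variable {ι R : Type*} [DecidableEq ι] [CommRing R]

/-- The identities satisfied by `M i j = x i / (x i - x j)` for pairwise distinct `x i`, with zero
diagonal. -/
structure IsCycleContractible (M : Matrix ι ι R) : Prop where
  apply_self : ∀ i, M i i = 0
  add_transpose_apply : ∀ i j, i ≠ j → M i j + M j i = 1
  mul_apply_apply : ∀ p t q, p ≠ t → t ≠ q → p ≠ q → M p t * M t q = M p q * (M p t + M t q - 1)

theorem prod_mul_swap_apply (M : Matrix ι ι R) {ρ : Perm ι} {S : Finset ι} {p t : ι}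
    (hp : p ∈ S.erase t) (ht : t ∈ S) (hρt : ρ t = t) :
    ∏ i ∈ S, M ((ρ * Equiv.swap p t) i) i
      = M t p * M (ρ p) t * ∏ i ∈ (S.erase t).erase p, M (ρ i) i := by
  rw [← mul_prod_erase S _ ht, ← mul_prod_erase (S.erase t) _ hp]
  simp only [Perm.mul_apply, swap_apply_left, swap_apply_right, hρt]
  rw [prod_congr rfl fun i hi => by
    rw [swap_apply_of_ne_of_ne (ne_of_mem_erase hi) (ne_of_mem_erase (mem_of_mem_erase hi))]]
  ring

theorem mul_mul_prod_erase_eq_add_ite (M : Matrix ι ι R) (hdiag : ∀ i, M i i = 0)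
    (hcontract : ∀ p t q, p ≠ t → t ≠ q → p ≠ q → M p t * M t q = M p q * (M p t + M t q - 1))
    {ρ : Perm ι} {T : Finset ι} {p t : ι} (hp : p ∈ T) (hpt : p ≠ t) (hρt : ρ t = t) :
    M t p * M (ρ p) t * ∏ i ∈ T.erase p, M (ρ i) i
      = (M (ρ p) t + M t p - 1) * ∏ i ∈ T, M (ρ i) i
        + if ρ p = p then M t p * M p t * ∏ i ∈ T.erase p, M (ρ i) i else 0 := by
  rw [← mul_prod_erase T _ hp]
  split_ifs with hρp
  · rw [hρp, hdiag]
    ring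
  · have hρpt : ρ p ≠ t := fun h => hpt (ρ.injective (h.trans hρt.symm))
    rw [add_zero, mul_comm (M t p), hcontract _ _ _ hρpt hpt.symm hρp]
    ring

variable [Fintype ι]

/-- For `χ = 1` and `χ = sign` this is the permanent, resp. determinant, of the principal submatrix
on `S`. -/
def permSumOn (χ : Perm ι → R) (M : Matrix ι ι R) (S : Finset ι) : R :=
  ∑ τ ∈ univ.filter (fun τ : Perm ι => τ.support ⊆ S), χ τ * ∏ i ∈ S, M (τ i) i

theorem permSumOn_empty (χ : Perm ι → R) (M : Matrix ι ι R) : permSumOn χ M ∅ = χ 1 := by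
  have : univ.filter (fun τ : Perm ι => τ.support ⊆ ∅) = {1} := by
    ext τ; simp [Perm.support_eq_empty_iff]
  simp only [permSumOn, this, sum_singleton, prod_empty, mul_one]

theorem permSumOn_univ_one (M : Matrix ι ι R) : permSumOn (fun _ => 1) M univ = M.permanent := by
  simp [permSumOn, permanent]

theorem permSumOn_univ_sign (M : Matrix ι ι R) :
    permSumOn (fun τ => (Perm.sign τ : R)) M univ = M.det := by
  simp [permSumOn, det_apply']

theorem support_mul_swap_subset_erase_iff {τ : Perm ι} {S : Finset ι} {p t : ι}
    (hp : p ∈ S.erase t) (ht : t ∈ S) :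
    (τ * Equiv.swap p t).support ⊆ S.erase t ↔ τ.support ⊆ S ∧ τ⁻¹ t = p := by
  have hsupp : (Equiv.swap p t).support ⊆ S := by
    rw [Perm.support_swap (ne_of_mem_erase hp)]
    exact insert_subset (mem_of_mem_erase hp) (singleton_subset_iff.2 ht)
  rw [subset_erase, Perm.notMem_support, Perm.mul_apply, swap_apply_right, Perm.inv_eq_iff_eq,
    eq_comm]
  refine and_congr_left fun _ => ⟨fun h => ?_, fun h => ?_⟩
  · simpa only [mul_swap_mul_self] using
      (Perm.support_mul_le (τ * Equiv.swap p t) (Equiv.swap p t)).trans (sup_le h hsupp)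
  · exact (Perm.support_mul_le τ (Equiv.swap p t)).trans (sup_le h hsupp)

variable {χ : Perm ι → R} {M : Matrix ι ι R} {ε : R} {S : Finset ι} {t : ι}

theorem permSumOn_eq_sum_sum_mul_swap (hdiag : ∀ i, M i i = 0)
    (hχ : ∀ τ a b, a ≠ b → χ (τ * Equiv.swap a b) = ε * χ τ) (ht : t ∈ S) :
    permSumOn χ M S = ε * ∑ p ∈ S.erase t,
      ∑ ρ ∈ univ.filter (fun ρ : Perm ι => ρ.support ⊆ S.erase t),
        χ ρ * (M t p * M (ρ p) t * ∏ i ∈ (S.erase t).erase p, M (ρ i) i) := by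
  have hmaps : ∀ τ ∈ univ.filter (fun τ : Perm ι => τ.support ⊆ S), τ⁻¹ t ∈ S := by
    intro τ hτ
    by_cases h : τ⁻¹ t = t
    · rwa [h]
    · refine (mem_filter.1 hτ).2 (Perm.mem_support.2 ?_)
      rwa [Perm.coe_inv, apply_symm_apply, ne_comm]
  rw [permSumOn, ← sum_fiberwise_of_maps_to hmaps, ← add_sum_erase S _ ht, mul_sum]
  have hfixed : ∑ τ ∈ univ.filter (fun τ : Perm ι => τ.support ⊆ S) with τ⁻¹ t = t,
      χ τ * ∏ i ∈ S, M (τ i) i = 0 := by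
    refine sum_eq_zero fun τ hτ => ?_
    have hτt : τ t = t := (Perm.inv_eq_iff_eq.1 (mem_filter.1 hτ).2).symm
    rw [prod_eq_zero ht (by rw [hτt, hdiag]), mul_zero]
  rw [hfixed, zero_add]
  refine sum_congr rfl fun p hp => ?_
  rw [mul_sum]
  symm
  -- `τ ↦ τ * swap p t` cuts `t` out of its cycle, where `p = τ⁻¹ t` is the predecessor of `t`.
  refine sum_nbij' (· * Equiv.swap p t) (· * Equiv.swap p t) ?_ ?_ ?_ ?_ ?_
  · intro ρ hρ
    simp only [mem_filter, mem_univ, true_and] at hρ ⊢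
    rw [← support_mul_swap_subset_erase_iff hp ht, mul_swap_mul_self]
    exact hρ
  · intro τ hτ
    simp only [mem_filter, mem_univ, true_and] at hτ ⊢
    exact (support_mul_swap_subset_erase_iff hp ht).2 hτ
  · exact fun τ _ => mul_swap_mul_self p t τ
  · exact fun ρ _ => mul_swap_mul_self p t ρ
  · intro ρ hρ
    have hρt : ρ t = t := Perm.notMem_support.1 fun h =>
      notMem_erase t S ((mem_filter.1 hρ).2 h)
    rw [hχ ρ p t (ne_of_mem_erase hp), prod_mul_swap_apply M hp ht hρt]
    ring

theorem sum_apply_add_sub_one_eq_zero (hswap : ∀ i j, i ≠ j → M i j + M j i = 1)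
    {ρ : Perm ι} {T : Finset ι} (hρ : ρ.support ⊆ T) (ht : t ∉ T) :
    ∑ p ∈ T, (M (ρ p) t + M t p - 1) = 0 := by
  rw [sum_sub_distrib, sum_add_distrib,
    ρ.sum_comp T (fun x => M x t) fun a ha => hρ (Perm.mem_support.2 ha), ← sum_add_distrib,
    sum_congr rfl fun p hp => hswap p t fun h => ht (h ▸ hp), sub_self]

theorem permSumOn_eq_of_mem (hM : M.IsCycleContractible)
    (hχ : ∀ τ a b, a ≠ b → χ (τ * Equiv.swap a b) = ε * χ τ) (ht : t ∈ S) :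
    permSumOn χ M S
      = ε * ∑ p ∈ S.erase t, M t p * M p t * permSumOn χ M ((S.erase t).erase p) := by
  rw [permSumOn_eq_sum_sum_mul_swap hM.apply_self hχ ht]
  congr 1
  set T := S.erase t
  set B := univ.filter fun ρ : Perm ι => ρ.support ⊆ T
  have hfix : ∀ ρ ∈ B, ρ t = t := fun ρ hρ =>
    Perm.notMem_support.1 fun h => notMem_erase t S ((mem_filter.1 hρ).2 h)
  have hsplit : ∀ p ∈ T, ∀ ρ ∈ B,
      χ ρ * (M t p * M (ρ p) t * ∏ i ∈ T.erase p, M (ρ i) i)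
        = χ ρ * (∏ i ∈ T, M (ρ i) i) * (M (ρ p) t + M t p - 1)
          + if ρ p = p then M t p * M p t * (χ ρ * ∏ i ∈ T.erase p, M (ρ i) i) else 0 := by
    intro p hp ρ hρ
    rw [mul_mul_prod_erase_eq_add_ite M hM.apply_self hM.mul_apply_apply hp (ne_of_mem_erase hp)
      (hfix ρ hρ)]
    split_ifs <;> ring
  have hcycles : ∑ p ∈ T, ∑ ρ ∈ B, χ ρ * (∏ i ∈ T, M (ρ i) i) * (M (ρ p) t + M t p - 1) = 0 := by
    rw [sum_comm]
    refine sum_eq_zero fun ρ hρ => ?_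
    rw [← mul_sum, sum_apply_add_sub_one_eq_zero hM.add_transpose_apply (mem_filter.1 hρ).2
      (notMem_erase t S), mul_zero]
  have htransp : ∀ p ∈ T,
      ∑ ρ ∈ B, (if ρ p = p then M t p * M p t * (χ ρ * ∏ i ∈ T.erase p, M (ρ i) i) else 0)
        = M t p * M p t * permSumOn χ M (T.erase p) := by
    intro p _
    rw [← sum_filter, permSumOn, mul_sum, filter_filter]
    congr 1
    ext ρ
    simp only [mem_filter, mem_univ, true_and, subset_erase, Perm.notMem_support]
  simp only [sum_congr rfl fun p hp => sum_congr rfl (hsplit p hp), sum_add_distrib, hcycles,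
    zero_add]
  exact sum_congr rfl htransp

theorem permSumOn_one_eq_neg_one_pow_mul_sign (hM : M.IsCycleContractible) {k : ℕ}
    (hS : S.card = 2 * k) :
    permSumOn (fun _ => 1) M S = (-1) ^ k * permSumOn (fun τ => (Perm.sign τ : R)) M S := by
  induction k generalizing S with
  | zero =>
    rw [card_eq_zero.1 hS, permSumOn_empty, permSumOn_empty]
    simp
  | succ k ih =>
    obtain ⟨t, ht⟩ := card_pos.1 (by omega : 0 < S.card)
    rw [permSumOn_eq_of_mem hM (fun _ _ _ _ => (mul_one 1).symm) ht,
      permSumOn_eq_of_mem (ε := -1) hM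
        (fun τ a b hab => by simp [Perm.sign_mul, Perm.sign_swap hab]) ht,
      one_mul, mul_sum, mul_sum]
    refine sum_congr rfl fun p hp => ?_
    rw [ih (by rw [card_erase_of_mem hp, card_erase_of_mem ht]; omega)]
    ring

theorem IsCycleContractible.permanent_eq_neg_one_pow_mul_det (hM : M.IsCycleContractible) {k : ℕ}
    (hcard : Fintype.card ι = 2 * k) :
    M.permanent = (-1) ^ k * M.det := by
  rw [← permSumOn_univ_one, ← permSumOn_univ_sign,
    permSumOn_one_eq_neg_one_pow_mul_sign hM (by rwa [card_univ])]

end Matrix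

variable {K : Type*} [Field K]

theorem inv_one_sub_add_inv_one_sub_inv {x : K} (hx0 : x ≠ 0) (hx1 : x ≠ 1) :
    (1 - x)⁻¹ + (1 - x⁻¹)⁻¹ = 1 := by
  rw [show 1 - x⁻¹ = (x - 1) / x by field_simp]
  field_simp
  ring

theorem inv_one_sub_mul_inv_one_sub {x y : K} (hx : x ≠ 1) (hy : y ≠ 1) (hxy : x * y ≠ 1) :
    (1 - x)⁻¹ * (1 - y)⁻¹ = (1 - x * y)⁻¹ * ((1 - x)⁻¹ + (1 - y)⁻¹ - 1) := by
  field_simp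
  ring

theorem Function.Periodic.sum_fin_intCast_sub {M : Type*} [AddCommMonoid M] {n : ℕ} {f : ℤ → M}
    (hf : Function.Periodic f n) (i : Fin n) :
    ∑ j : Fin n, f ((i : ℤ) - j) = ∑ j : Fin n, f j := by
  have : NeZero n := NeZero.of_pos i.pos
  calc ∑ j : Fin n, f ((i : ℤ) - j) = ∑ j : Fin n, f ((i - j : Fin n) : ℤ) := by
        refine sum_congr rfl fun j _ => ?_
        rw [Fin.coe_int_sub_eq_mod, Int.emod_def, mul_comm]
        simpa using (hf.sub_int_mul_eq (x := (i : ℤ) - j) (((i : ℤ) - j) / n)).symm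
    _ = ∑ j : Fin n, f j := Fintype.sum_equiv (Equiv.subLeft i) _ _ fun _ => rfl

theorem periodic_zpow_of_pow_eq_one {x : K} {n : ℕ} (hx : x ^ n = 1) :
    Function.Periodic (fun d : ℤ => x ^ d) n := by
  rcases Nat.eq_zero_or_pos n with rfl | hn
  · simp [Function.Periodic]
  · have hx0 : x ≠ 0 := by rintro rfl; simp [hn.ne'] at hx
    intro d
    simp only [zpow_add₀ hx0, zpow_natCast, hx, mul_one]

/-- The diagonal entries are `(1 - 1)⁻¹ = 0`. -/
def invOneSubMatrix (ζ : K) (n : ℕ) : Matrix (Fin n) (Fin n) K :=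
  Matrix.of fun i j => (1 - ζ ^ ((j : ℤ) - i))⁻¹

theorem invOneSubMatrix_apply_self (ζ : K) {n : ℕ} (i : Fin n) : invOneSubMatrix ζ n i i = 0 := by
  simp [invOneSubMatrix]

namespace IsPrimitiveRoot

variable {ζ : K} {n : ℕ}

theorem zpow_fin_sub_ne_one (hζ : IsPrimitiveRoot ζ n) {i j : Fin n} (hij : i ≠ j) :
    ζ ^ ((j : ℤ) - i) ≠ 1 := by
  intro h
  rw [hζ.zpow_eq_one_iff_dvd] at h
  have := Int.eq_zero_of_abs_lt_dvd h (by rw [abs_lt]; omega)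
  exact hij (Fin.ext (by omega))

theorem isCycleContractible_invOneSubMatrix (hζ : IsPrimitiveRoot ζ n) :
    (invOneSubMatrix ζ n).IsCycleContractible where
  apply_self := invOneSubMatrix_apply_self ζ
  add_transpose_apply i j hij := by
    have hζ0 : ζ ≠ 0 := hζ.ne_zero i.pos.ne'
    have hinv : ζ ^ ((i : ℤ) - j) = (ζ ^ ((j : ℤ) - i))⁻¹ := by rw [← zpow_neg, neg_sub]
    simp only [invOneSubMatrix, Matrix.of_apply]
    rw [hinv]
    exact inv_one_sub_add_inv_one_sub_inv (zpow_ne_zero _ hζ0) (hζ.zpow_fin_sub_ne_one hij)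
  mul_apply_apply p t q hpt htq hpq := by
    have hζ0 : ζ ≠ 0 := hζ.ne_zero p.pos.ne'
    have hmul : ζ ^ ((t : ℤ) - p) * ζ ^ ((q : ℤ) - t) = ζ ^ ((q : ℤ) - p) := by
      rw [← zpow_add₀ hζ0]; ring_nf
    simp only [invOneSubMatrix, Matrix.of_apply]
    rw [← hmul]
    exact inv_one_sub_mul_inv_one_sub (hζ.zpow_fin_sub_ne_one hpt) (hζ.zpow_fin_sub_ne_one htq)
      (hmul ▸ hζ.zpow_fin_sub_ne_one hpq)

theorem zpow_ne_one_of_ne_zero [NeZero n] (hζ : IsPrimitiveRoot ζ n) {d : Fin n} (hd : d ≠ 0) :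
    ζ ^ (d : ℤ) ≠ 1 := by
  simpa using hζ.zpow_fin_sub_ne_one (Ne.symm hd)

theorem zpow_pow_eq_one (hζ : IsPrimitiveRoot ζ n) (r : ℤ) : (ζ ^ r) ^ n = 1 := by
  rw [← zpow_natCast, ← zpow_mul, mul_comm, zpow_mul, hζ.zpow_eq_one, one_zpow]

theorem sum_fin_zpow_mul_eq_zero (hζ : IsPrimitiveRoot ζ n) {r : ℤ} (hr : ¬(n : ℤ) ∣ r) :
    ∑ d : Fin n, ζ ^ (r * d) = 0 := by
  have hw : ζ ^ r ≠ 1 := fun h => hr ((hζ.zpow_eq_one_iff_dvd r).1 h)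
  simp only [zpow_mul, zpow_natCast]
  rw [Fin.sum_univ_eq_sum_range (fun i => (ζ ^ r) ^ i), geom_sum_eq hw, hζ.zpow_pow_eq_one,
    sub_self, zero_div]

theorem two_mul_sum_inv_one_sub_mul_zpow (hζ : IsPrimitiveRoot ζ n) {m : ℕ} (hm : m < n) :
    2 * ∑ d : Fin n, (1 - ζ ^ (d : ℤ))⁻¹ * ζ ^ (-(m * d : ℤ)) = n - 1 - 2 * m := by
  have : NeZero n := ⟨by omega⟩
  have hζ0 : ζ ≠ 0 := hζ.ne_zero (NeZero.ne n)
  induction m with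
  | zero =>
    have hper : Function.Periodic (fun d : ℤ => (1 - ζ ^ d)⁻¹) n :=
      (periodic_zpow_of_pow_eq_one hζ.pow_eq_one).comp fun x => (1 - x)⁻¹
    have hpair : ∀ d : Fin n, (1 - ζ ^ (d : ℤ))⁻¹ + (1 - ζ ^ ((0 : Fin n) - (d : ℤ)))⁻¹
        = if d = 0 then 0 else 1 := by
      intro d
      split_ifs with hd
      · simp [hd]
      · rw [Fin.val_zero, Nat.cast_zero, zero_sub, zpow_neg]
        exact inv_one_sub_add_inv_one_sub_inv (zpow_ne_zero _ hζ0) (hζ.zpow_ne_one_of_ne_zero hd)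
    calc 2 * ∑ d : Fin n, (1 - ζ ^ (d : ℤ))⁻¹ * ζ ^ (-((0 : ℕ) * d : ℤ))
        = ∑ d : Fin n, (1 - ζ ^ (d : ℤ))⁻¹ + ∑ d : Fin n, (1 - ζ ^ ((0 : Fin n) - (d : ℤ)))⁻¹ := by
          rw [hper.sum_fin_intCast_sub 0]
          simp only [Nat.cast_zero, zero_mul, neg_zero, zpow_zero, mul_one]
          ring
      _ = n - 1 - 2 * ((0 : ℕ) : K) := by
          rw [← sum_add_distrib, sum_congr rfl fun d _ => hpair d, sum_ite, sum_const_zero,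
            zero_add, sum_const, nsmul_one, filter_ne', card_erase_of_mem (mem_univ _), card_univ,
            Fintype.card_fin, Nat.cast_pred (Nat.pos_of_neZero n)]
          ring
  | succ m ih =>
    have hterm : ∀ d : Fin n, (1 - ζ ^ (d : ℤ))⁻¹ * ζ ^ (-(m * d : ℤ))
        - (1 - ζ ^ (d : ℤ))⁻¹ * ζ ^ (-((m + 1 : ℕ) * d : ℤ))
        = (if d = 0 then 1 else 0) - ζ ^ (-((m + 1 : ℕ) : ℤ) * d) := by
      intro d
      split_ifs with hd
      · simp [hd]
      · have hsplit : ζ ^ (-(m * d : ℤ)) = ζ ^ (d : ℤ) * ζ ^ (-((m + 1 : ℕ) * d : ℤ)) := by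
          rw [← zpow_add₀ hζ0]; push_cast; ring_nf
        have hne : 1 - ζ ^ (d : ℤ) ≠ 0 := sub_ne_zero.2 (hζ.zpow_ne_one_of_ne_zero hd).symm
        rw [hsplit, neg_mul]
        field_simp
        ring
    have hdiff : ∑ d : Fin n, (1 - ζ ^ (d : ℤ))⁻¹ * ζ ^ (-(m * d : ℤ))
        - ∑ d : Fin n, (1 - ζ ^ (d : ℤ))⁻¹ * ζ ^ (-((m + 1 : ℕ) * d : ℤ)) = 1 := by
      rw [← sum_sub_distrib, sum_congr rfl fun d _ => hterm d, sum_sub_distrib, sum_ite_eq',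
        if_pos (mem_univ _), hζ.sum_fin_zpow_mul_eq_zero, sub_zero]
      intro h
      have := Int.eq_zero_of_abs_lt_dvd h (by rw [abs_lt]; omega)
      omega
    linear_combination (norm := (push_cast; ring)) ih (by omega) - 2 * hdiff

open Matrix in
theorem vandermonde_mul_invOneSubMatrix (hζ : IsPrimitiveRoot ζ n) :
    vandermonde (fun m : Fin n => ζ ^ (m : ℕ)) * invOneSubMatrix ζ n
      = diagonal (fun m : Fin n => ∑ d : Fin n, (1 - ζ ^ (d : ℤ))⁻¹ * ζ ^ (-(m * d : ℤ)))
        * vandermonde (fun m : Fin n => ζ ^ (m : ℕ)) := by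
  ext m j
  have hζ0 : ζ ≠ 0 := hζ.ne_zero m.pos.ne'
  have hper : Function.Periodic (fun d : ℤ => (1 - ζ ^ d)⁻¹ * ζ ^ (-(m * d : ℤ))) n := by
    have h := ((periodic_zpow_of_pow_eq_one hζ.pow_eq_one).comp fun x => (1 - x)⁻¹).mul
      (periodic_zpow_of_pow_eq_one (hζ.zpow_pow_eq_one (-(m : ℤ))))
    simpa only [Pi.mul_def, Function.comp_def, ← _root_.zpow_mul, neg_mul] using h
  have hpow : ∀ i : Fin n, (ζ ^ (m : ℕ)) ^ (i : ℕ)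
      = ζ ^ ((m : ℤ) * j) * ζ ^ (-(m * ((j : ℤ) - i) : ℤ)) := by
    intro i
    rw [← zpow_add₀ hζ0, ← pow_mul, ← zpow_natCast]
    push_cast
    ring_nf
  rw [mul_apply, diagonal_mul, vandermonde_apply, hpow j]
  simp only [vandermonde_apply, invOneSubMatrix, of_apply, hpow, mul_assoc, ← mul_sum]
  rw [sub_self, mul_zero, neg_zero, zpow_zero, mul_one, mul_comm, ← hper.sum_fin_intCast_sub j]
  exact congrArg (· * _) (sum_congr rfl fun i _ => mul_comm _ _)

theorem two_pow_mul_det_invOneSubMatrix (hζ : IsPrimitiveRoot ζ n) :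
    2 ^ n * (invOneSubMatrix ζ n).det = ∏ m : Fin n, ((n : K) - 1 - 2 * m) := by
  have hV : (Matrix.vandermonde fun m : Fin n => ζ ^ (m : ℕ)).det ≠ 0 :=
    Matrix.det_vandermonde_ne_zero_iff.2 fun a b h => Fin.ext (hζ.pow_inj a.isLt b.isLt h)
  have hdet := congrArg Matrix.det (hζ.vandermonde_mul_invOneSubMatrix)
  rw [Matrix.det_mul, Matrix.det_mul, Matrix.det_diagonal] at hdet
  rw [mul_left_cancel₀ hV (hdet.trans (mul_comm _ _)),
    show (2 : K) ^ n = ∏ _m : Fin n, 2 by simp, ← prod_mul_distrib]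
  exact prod_congr rfl fun m _ => hζ.two_mul_sum_inv_one_sub_mul_zpow m.isLt

end IsPrimitiveRoot

theorem prod_range_two_mul_sub_one_sub_two_mul {R : Type*} [CommRing R] (k : ℕ) :
    ∏ m ∈ range (2 * k), ((2 * k : ℕ) - 1 - 2 * m : R) = (-1) ^ k * ((2 * k - 1)‼ : R) ^ 2 := by
  induction k with
  | zero => simp
  | succ k ih =>
    rw [show 2 * (k + 1) = 2 * k + 1 + 1 by ring, prod_range_succ, prod_range_succ',
      show 2 * k + 1 + 1 - 1 = 2 * k + 1 by omega, Nat.doubleFactorial_add_one]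
    have hshift : ∀ m ∈ range (2 * k), ((2 * k + 1 + 1 : ℕ) - 1 - 2 * (m + 1 : ℕ) : R)
        = (2 * k : ℕ) - 1 - 2 * m := fun m _ => by push_cast; ring
    rw [prod_congr rfl hshift, ih]
    push_cast
    ring

theorem sum_derangements_even_general (n : ℕ) (heven : Even n)
    (ζ : ℂ) (hζ : IsPrimitiveRoot ζ n) :
    ∑ τ ∈ univ.filter (fun τ : Perm (Fin n) => ∀ j, τ j ≠ j),
        ∏ j : Fin n, (1 - ζ ^ ((j : ℤ) - (τ j : ℤ)))⁻¹ =
      (Nat.doubleFactorial (n - 1) : ℂ) ^ 2 / 2 ^ n := by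
  obtain ⟨k, rfl⟩ := heven.two_dvd
  have hperm : ∑ τ ∈ univ.filter (fun τ : Perm (Fin (2 * k)) => ∀ j, τ j ≠ j),
      ∏ j : Fin (2 * k), (1 - ζ ^ ((j : ℤ) - (τ j : ℤ)))⁻¹
        = (invOneSubMatrix ζ (2 * k)).permanent :=
    sum_filter_of_ne fun τ _ hτ j hj => hτ (prod_eq_zero (mem_univ j) (by simp [hj]))
  have hdet := hζ.two_pow_mul_det_invOneSubMatrix
  rw [Fin.prod_univ_eq_prod_range (fun m => ((2 * k : ℕ) : ℂ) - 1 - 2 * m),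
    prod_range_two_mul_sub_one_sub_two_mul] at hdet
  rw [hperm, hζ.isCycleContractible_invOneSubMatrix.permanent_eq_neg_one_pow_mul_det
    (Fintype.card_fin _), eq_div_iff (pow_ne_zero _ two_ne_zero)]
  have hsign : ((-1 : ℂ) ^ k) ^ 2 = 1 := by rw [← pow_mul, pow_mul', neg_one_sq, one_pow]
  linear_combination (-1 : ℂ) ^ k * hdet + ((2 * k - 1)‼ : ℂ) ^ 2 * hsign

theorem sum_derangements_even (n : ℕ) (hn : 1 < n) (heven : Even n)
    (ζ : ℂ) (hζ : IsPrimitiveRoot ζ n) :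
    ∑ τ ∈ univ.filter (fun τ : Perm (Fin n) => ∀ j, τ j ≠ j),
        ∏ j : Fin n, (1 - ζ ^ ((j : ℤ) - (τ j : ℤ)))⁻¹ =
      (Nat.doubleFactorial (n - 1) : ℂ) ^ 2 / 2 ^ n :=
  sum_derangements_even_general n heven ζ hζ
end

section
/- For any positive integer m and any matrix A over a field whose entries satisfy A[j][k] = -A[k][j] for j ≠ k (i.e., the function τ ↦ Π_{j: τ(j)≠j} A[j][τ(j)] changes sign under τ ↦ τ⁻¹ for cycles of odd length), the sum Σ_{τ ∈ S_m} Π_{j: τ(j)≠j} A[j][τ(j)] equals Σ over permutations τ all of whose nontrivial cycles have even length of Π_{j: τ(j)≠j} A[j][τ(j)]. In particular, with A[j][k] = (x_j+x_k)/(x_j-x_k) for j≠k, per of the matrix (with diagonal 1) equals 1 + Σ_{τ ∈ E_m} f(τ), where E_m is the set of non-identity permutations of {1,...,m} all of whose cycles in the disjoint cycle decomposition have even length. -/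
/-!
Write `f = c * g` with `c` the cycle of `f` through `a` and `g = f * c⁻¹` disjoint from `c`.
Replacing `c` by `c⁻¹` keeps the support and every cycle length, and multiplies
`∏_{j ∈ supp f} A j (f j)` by `(-1) ^ |supp c|` because `A` is antisymmetric off the diagonal.
Reversing the cycle through a point chosen from the (invariant) set of points on odd cycles is
therefore a sign-reversing involution on the permutations with an odd cycle; it has no fixed
points since an odd cycle of length at least `3` is not its own inverse. So those permutations
contribute nothing. For the permanent, the diagonal entries are `1`, so each term is a product
over moved points, and `(x_j + x_k) / (x_j - x_k)` is antisymmetric.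
-/

open Equiv Finset

namespace Equiv.Perm

variable {α R : Type*} [Fintype α] [DecidableEq α]

theorem mem_cycleType_iff_exists_cycleOf {f : Perm α} {n : ℕ} :
    n ∈ f.cycleType ↔ ∃ x ∈ f.support, #(f.cycleOf x).support = n := by
  rw [cycleType_def, Multiset.mem_map]
  constructor
  · rintro ⟨c, hc, rfl⟩
    obtain ⟨x, hx⟩ := (mem_cycleFactorsFinset_iff.mp hc).1.nonempty_support
    exact ⟨x, mem_cycleFactorsFinset_support_le hc hx, by rw [← cycle_is_cycleOf hx hc]; rfl⟩
  · rintro ⟨x, hx, rfl⟩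
    exact ⟨f.cycleOf x, cycleOf_mem_cycleFactorsFinset_iff.mpr hx, rfl⟩

theorem cycleOf_cycleOf (f : Perm α) (a : α) : (f.cycleOf a).cycleOf a = f.cycleOf a := by
  by_cases ha : f a = a
  · rw [(cycleOf_eq_one_iff f).mpr ha, cycleOf_one]
  · exact (isCycle_cycleOf f ha).cycleOf_eq (by simpa using ha)

theorem disjoint_cycleOf_mul_inv_cycleOf (f : Perm α) (a : α) :
    Disjoint (f.cycleOf a) (f * (f.cycleOf a)⁻¹) := by
  by_cases ha : a ∈ f.support
  · exact (disjoint_mul_inv_of_mem_cycleFactorsFinset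
      (cycleOf_mem_cycleFactorsFinset_iff.mpr ha)).symm
  · rw [(cycleOf_eq_one_iff f).mpr (notMem_support.mp ha)]
    exact disjoint_one_left _

theorem cycleOf_mul_mul_inv_cycleOf (f : Perm α) (a : α) :
    f.cycleOf a * (f * (f.cycleOf a)⁻¹) = f := by
  rw [(disjoint_cycleOf_mul_inv_cycleOf f a).commute.eq, inv_mul_cancel_right]

theorem Disjoint.support_inv_mul {σ τ : Perm α} (h : Disjoint σ τ) :
    (σ⁻¹ * τ).support = (σ * τ).support := by
  rw [h.inv_left.support_mul, h.support_mul, support_inv]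

theorem Disjoint.card_support_cycleOf_inv_mul {σ τ : Perm α} (h : Disjoint σ τ) (x : α) :
    #((σ⁻¹ * τ).cycleOf x).support = #((σ * τ).cycleOf x).support := by
  have hx : Disjoint (σ.cycleOf x) (τ.cycleOf x) :=
    h.mono (support_cycleOf_le σ x) (support_cycleOf_le τ x)
  rw [h.inv_left.cycleOf_mul_distrib, h.cycleOf_mul_distrib, ← cycleOf_inv,
    hx.inv_left.card_support_mul, hx.card_support_mul, support_inv]

def supportProd [CommMonoid R] (A : α → α → R) (σ : Perm α) : R :=
  ∏ j ∈ σ.support, A j (σ j)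

theorem supportProd_one [CommMonoid R] (A : α → α → R) : supportProd A 1 = 1 := by
  rw [supportProd, support_one, prod_empty]

theorem Disjoint.supportProd_mul [CommMonoid R] (A : α → α → R) {σ τ : Perm α}
    (h : Disjoint σ τ) : supportProd A (σ * τ) = supportProd A σ * supportProd A τ := by
  rw [supportProd, h.support_mul, prod_union h.disjoint_support]
  congr 1
  · refine prod_congr rfl fun j hj => ?_
    rw [mul_apply, (disjoint_iff_eq_or_eq.mp h j).resolve_left (mem_support.mp hj)]
  · refine prod_congr rfl fun j hj => ?_
    rw [mul_apply, (disjoint_iff_eq_or_eq.mp h (τ j)).resolve_right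
      (mem_support.mp (apply_mem_support.mpr hj))]

theorem supportProd_inv [CommRing R] {A : α → α → R} (hA : ∀ j k, j ≠ k → A j k = -A k j)
    (σ : Perm α) : supportProd A σ⁻¹ = (-1) ^ #σ.support * supportProd A σ := by
  calc supportProd A σ⁻¹ = ∏ j ∈ σ.support, A (σ j) j := by
        rw [supportProd, support_inv,
          σ.prod_comp' _ _ (coe_support_eq_set_support σ).symm.subset]
        rfl
    _ = ∏ j ∈ σ.support, (-1) * A j (σ j) := by
        refine prod_congr rfl fun j hj => ?_
        rw [hA _ _ (mem_support.mp hj), neg_one_mul]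
    _ = (-1) ^ #σ.support * supportProd A σ := by
        rw [prod_mul_distrib, prod_const, supportProd]

def reverseCycle (f : Perm α) (a : α) : Perm α :=
  (f.cycleOf a)⁻¹ * (f * (f.cycleOf a)⁻¹)

theorem support_reverseCycle (f : Perm α) (a : α) : (f.reverseCycle a).support = f.support := by
  conv_rhs => rw [← cycleOf_mul_mul_inv_cycleOf f a]
  exact (disjoint_cycleOf_mul_inv_cycleOf f a).support_inv_mul

theorem card_support_cycleOf_reverseCycle (f : Perm α) (a b : α) :
    #((f.reverseCycle a).cycleOf b).support = #(f.cycleOf b).support := by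
  conv_rhs => rw [← cycleOf_mul_mul_inv_cycleOf f a]
  exact (disjoint_cycleOf_mul_inv_cycleOf f a).card_support_cycleOf_inv_mul b

theorem cycleOf_reverseCycle (f : Perm α) (a : α) :
    (f.reverseCycle a).cycleOf a = (f.cycleOf a)⁻¹ := by
  have hfix : (f * (f.cycleOf a)⁻¹) a = a := by simp [cycleOf_inv]
  rw [reverseCycle, cycleOf_mul_of_apply_right_eq_self
    (disjoint_cycleOf_mul_inv_cycleOf f a).inv_left.commute a hfix, ← cycleOf_inv,
    cycleOf_cycleOf]

theorem reverseCycle_reverseCycle (f : Perm α) (a : α) :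
    (f.reverseCycle a).reverseCycle a = f := by
  rw [reverseCycle, cycleOf_reverseCycle, reverseCycle]
  group

theorem reverseCycle_ne_self {f : Perm α} {a : α} (ha : Odd #(f.cycleOf a).support) :
    f.reverseCycle a ≠ f := by
  intro h
  have hfa : f a ≠ a := fun hfa => by simp [(cycleOf_eq_one_iff f).mpr hfa] at ha
  have hsq : f.cycleOf a ^ 2 = 1 := by
    rw [sq, ← inv_eq_iff_mul_eq_one]
    exact mul_right_cancel (h.trans (cycleOf_mul_mul_inv_cycleOf f a).symm)
  have hdvd := orderOf_dvd_of_pow_eq_one hsq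
  rw [(isCycle_cycleOf f hfa).orderOf] at hdvd
  rcases (Nat.dvd_prime Nat.prime_two).mp hdvd with h1 | h2
  · exact card_support_ne_one _ h1
  · exact Nat.not_odd_iff_even.mpr (h2 ▸ even_two) ha

theorem supportProd_reverseCycle [CommRing R] {A : α → α → R}
    (hA : ∀ j k, j ≠ k → A j k = -A k j) {f : Perm α} {a : α}
    (ha : Odd #(f.cycleOf a).support) :
    supportProd A (f.reverseCycle a) = -supportProd A f := by
  have hdisj := disjoint_cycleOf_mul_inv_cycleOf f a
  calc supportProd A (f.reverseCycle a)
      = supportProd A (f.cycleOf a)⁻¹ * supportProd A (f * (f.cycleOf a)⁻¹) :=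
        hdisj.inv_left.supportProd_mul A
    _ = -(supportProd A (f.cycleOf a) * supportProd A (f * (f.cycleOf a)⁻¹)) := by
        rw [supportProd_inv hA, ha.neg_one_pow, neg_one_mul, neg_mul]
    _ = -supportProd A f := by rw [← hdisj.supportProd_mul, cycleOf_mul_mul_inv_cycleOf]

def oddCyclePoints (f : Perm α) : Finset α :=
  f.support.filter fun b => Odd #(f.cycleOf b).support

theorem oddCyclePoints_nonempty_iff (f : Perm α) :
    (oddCyclePoints f).Nonempty ↔ ¬∀ n ∈ f.cycleType, Even n := by
  simp only [not_forall, Nat.not_even_iff_odd, exists_prop, mem_cycleType_iff_exists_cycleOf]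
  constructor
  · rintro ⟨x, hx⟩
    rw [oddCyclePoints, mem_filter] at hx
    exact ⟨_, ⟨x, hx.1, rfl⟩, hx.2⟩
  · rintro ⟨_, ⟨x, hx, rfl⟩, hodd⟩
    exact ⟨x, mem_filter.mpr ⟨hx, hodd⟩⟩

theorem oddCyclePoints_reverseCycle (f : Perm α) (a : α) :
    oddCyclePoints (f.reverseCycle a) = oddCyclePoints f := by
  simp only [oddCyclePoints, support_reverseCycle, card_support_cycleOf_reverseCycle]

theorem sum_supportProd_filter_not_forall_even_cycleType [CommRing R] {A : α → α → R}
    (hA : ∀ j k, j ≠ k → A j k = -A k j) :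
    ∑ f ∈ univ.filter (fun f : Perm α => ¬∀ n ∈ f.cycleType, Even n), supportProd A f = 0 := by
  have hne (f) (hf : f ∈ univ.filter fun f : Perm α => ¬∀ n ∈ f.cycleType, Even n) :
      (oddCyclePoints f).Nonempty :=
    (oddCyclePoints_nonempty_iff f).mpr (mem_filter.mp hf).2
  have hodd (f : Perm α) (hf) : Odd #(f.cycleOf (hne f hf).choose).support :=
    (mem_filter.mp (hne f hf).choose_spec).2
  have choose_congr {s t : Finset α} (hs : s.Nonempty) (ht : t.Nonempty) (h : s = t) :
      hs.choose = ht.choose := by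
    subst h
    rfl
  refine sum_involution (fun f hf => f.reverseCycle (hne f hf).choose) ?_ ?_ ?_ ?_
  · intro f hf
    rw [supportProd_reverseCycle hA (hodd f hf), add_neg_cancel]
  · intro f hf _
    exact reverseCycle_ne_self (hodd f hf)
  · intro f hf
    refine mem_filter.mpr ⟨mem_univ _, (oddCyclePoints_nonempty_iff _).mp ?_⟩
    exact (oddCyclePoints_reverseCycle f _).symm ▸ hne f hf
  · intro f hf
    rw [choose_congr _ (hne f hf) (oddCyclePoints_reverseCycle f _), reverseCycle_reverseCycle]

theorem sum_supportProd_eq_sum_filter_even_cycleType [CommRing R] {A : α → α → R}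
    (hA : ∀ j k, j ≠ k → A j k = -A k j) :
    ∑ f : Perm α, supportProd A f =
      ∑ f ∈ univ.filter (fun f : Perm α => ∀ n ∈ f.cycleType, Even n), supportProd A f := by
  rw [← sum_filter_add_sum_filter_not univ (fun f : Perm α => ∀ n ∈ f.cycleType, Even n),
    sum_supportProd_filter_not_forall_even_cycleType hA, add_zero]

theorem sum_filter_supportProd_eq_one_add [CommSemiring R] (A : α → α → R)
    {P : Perm α → Prop} [DecidablePred P] (h1 : P 1) :
    ∑ f ∈ univ.filter P, supportProd A f =
      1 + ∑ f ∈ univ.filter (fun f => f ≠ 1 ∧ P f), supportProd A f := by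
  rw [← add_sum_erase _ _ (mem_filter.mpr ⟨mem_univ _, h1⟩), supportProd_one]
  congr 2
  ext f
  simp [and_comm]

end Equiv.Perm

theorem Matrix.permanent_of_eq_sum_supportProd {α R : Type*} [Fintype α] [DecidableEq α]
    [CommRing R] {A : α → α → R} (hA : ∀ j, A j j = 1) :
    (Matrix.of A).permanent = ∑ σ : Perm α, σ.supportProd A := by
  rw [← permanent_transpose, permanent]
  refine sum_congr rfl fun σ _ => (prod_subset (subset_univ _) fun j _ hj => ?_).symm
  rw [transpose_apply, of_apply, Perm.notMem_support.mp hj, hA]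

open scoped Classical in
theorem sum_perm_eq_sum_even_cycle_type_general {F : Type*} [Field F]
    (m : ℕ) (A : Matrix (Fin m) (Fin m) F)
    (hA : ∀ j k, j ≠ k → A j k = - A k j)
    (x : Fin m → F) :
    (∑ τ : Perm (Fin m), ∏ j ∈ τ.support, A j (τ j)) =
      (∑ τ ∈ univ.filter (fun τ : Perm (Fin m) => ∀ i ∈ τ.cycleType, Even i),
        ∏ j ∈ τ.support, A j (τ j)) ∧
    Matrix.permanent (Matrix.of fun j k : Fin m =>
        if j = k then (1 : F) else (x j + x k) / (x j - x k)) =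
      1 + ∑ τ ∈ univ.filter
          (fun τ : Perm (Fin m) => τ ≠ 1 ∧ ∀ i ∈ τ.cycleType, Even i),
        ∏ j ∈ τ.support, (x j + x (τ j)) / (x j - x (τ j)) := by
  set B : Fin m → Fin m → F := fun j k => if j = k then 1 else (x j + x k) / (x j - x k)
  have hB : ∀ j k, j ≠ k → B j k = -B k j := by
    intro j k hjk
    simp only [B, if_neg hjk, if_neg hjk.symm]
    rw [← div_neg, neg_sub, add_comm]
  refine ⟨Perm.sum_supportProd_eq_sum_filter_even_cycleType hA, ?_⟩
  rw [Matrix.permanent_of_eq_sum_supportProd (by simp [B]),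
    Perm.sum_supportProd_eq_sum_filter_even_cycleType hB,
    Perm.sum_filter_supportProd_eq_one_add _ (by simp)]
  refine congrArg _ (sum_congr rfl fun τ _ => prod_congr rfl fun j hj => ?_)
  simp [B, (Perm.mem_support.mp hj).symm]

open scoped Classical in
theorem sum_perm_eq_sum_even_cycle_type {F : Type*} [Field F] [CharZero F]
    (m : ℕ) (hm : 0 < m) (A : Matrix (Fin m) (Fin m) F)
    (hA : ∀ j k, j ≠ k → A j k = - A k j)
    (x : Fin m → F) (hx : Function.Injective x) :
    (∑ τ : Perm (Fin m), ∏ j ∈ τ.support, A j (τ j)) =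
      (∑ τ ∈ univ.filter (fun τ : Perm (Fin m) => ∀ i ∈ τ.cycleType, Even i),
        ∏ j ∈ τ.support, A j (τ j)) ∧
    Matrix.permanent (Matrix.of fun j k : Fin m =>
        if j = k then (1 : F) else (x j + x k) / (x j - x k)) =
      1 + ∑ τ ∈ univ.filter
          (fun τ : Perm (Fin m) => τ ≠ 1 ∧ ∀ i ∈ τ.cycleType, Even i),
        ∏ j ∈ τ.support, (x j + x (τ j)) / (x j - x (τ j)) :=
  sum_perm_eq_sum_even_cycle_type_general m A hA x
end
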